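/- arXiv:2305.03248 — 11 statements merged into one kernel-verified Lean document; each statement's English description precedes it below -/
import Mathlib

section
/- The dominating number of the composition of two relational systems equals the product of the dominating numbers: 𝔡(R₀; R₁) = 𝔡(R₀) · 𝔡(R₁) (as cardinals, assuming both are infinite or using cardinal multiplication). -/
/-!
The product of minimal dominating sets of `R₀` and `R₁` dominates the composition, giving `≤`.
Conversely, let `D` dominate the composition and let `A` be the set of `y₀` whose fibre
`{y₁ | (y₀, y₁) ∈ D}` dominates `R₁`. Then `A` dominates `R₀`: otherwise some `x₀` is related
only to points outside `A`, and choosing for each such `y₀` an `x₁` that its fibre misses yields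
a pair `(x₀, f)` that `D` does not dominate. Since the fibres over `A` are disjoint pieces of `D`,
`#D ≥ ∑_{y₀ ∈ A} #fibre ≥ #A · 𝔡(R₁) ≥ 𝔡(R₀) · 𝔡(R₁)`.
-/

open Cardinal

/-- The dominating number of a relational system: the least cardinality of a dominating set. -/
noncomputable def domNum {X Y : Type u} (R : X → Y → Prop) : Cardinal.{u} :=
  sInf { c : Cardinal.{u} | ∃ D : Set Y, (∀ x : X, ∃ y ∈ D, R x y) ∧ #D = c }

universe u

section Dominating

variable {X Y : Type u}

def Dominates (R : X → Y → Prop) (D : Set Y) : Prop :=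
  ∀ x, ∃ y ∈ D, R x y

theorem domNum_le_mk {R : X → Y → Prop} {D : Set Y} (hD : Dominates R D) : domNum R ≤ #D :=
  csInf_le (OrderBot.bddBelow _) ⟨D, hD, rfl⟩

theorem exists_dominates_mk_eq_domNum {R : X → Y → Prop} {D : Set Y} (hD : Dominates R D) :
    ∃ D', Dominates R D' ∧ #D' = domNum R :=
  csInf_mem (s := { c | ∃ D', Dominates R D' ∧ #D' = c }) ⟨#D, D, hD, rfl⟩

theorem le_domNum {R : X → Y → Prop} {D : Set Y} (hD : Dominates R D) {c : Cardinal.{u}}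
    (hc : ∀ D', Dominates R D' → c ≤ #D') : c ≤ domNum R := by
  refine le_csInf ⟨#D, D, hD, rfl⟩ ?_
  rintro _ ⟨D', hD', rfl⟩
  exact hc D' hD'

theorem domNum_eq_zero_of_not_exists_dominates {R : X → Y → Prop}
    (h : ¬ ∃ D, Dominates R D) : domNum R = 0 := by
  have : { c : Cardinal.{u} | ∃ D, Dominates R D ∧ #D = c } = ∅ :=
    Set.eq_empty_of_forall_notMem fun _ ⟨D, hD, _⟩ => h ⟨D, hD⟩
  change sInf { c : Cardinal.{u} | ∃ D, Dominates R D ∧ #D = c } = 0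
  rw [this, Cardinal.sInf_empty]

end Dominating

section SeqComp

variable {X₀ Y₀ X₁ Y₁ : Type u} {R₀ : X₀ → Y₀ → Prop} {R₁ : X₁ → Y₁ → Prop}

/-- The relation `⊏*` of the composition `(R₀; R₁)`. -/
def seqComp (R₀ : X₀ → Y₀ → Prop) (R₁ : X₁ → Y₁ → Prop) :
    X₀ × (Y₀ → X₁) → Y₀ × Y₁ → Prop :=
  fun p q => R₀ p.1 q.1 ∧ R₁ (p.2 q.1) q.2

theorem dominates_seqComp_prod {D₀ : Set Y₀} {D₁ : Set Y₁} (h₀ : Dominates R₀ D₀)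
    (h₁ : Dominates R₁ D₁) : Dominates (seqComp R₀ R₁) (D₀ ×ˢ D₁) := by
  rintro ⟨x, f⟩
  obtain ⟨y₀, hy₀, hx⟩ := h₀ x
  obtain ⟨y₁, hy₁, hf⟩ := h₁ (f y₀)
  exact ⟨(y₀, y₁), ⟨hy₀, hy₁⟩, hx, hf⟩

theorem dominates_fibres_of_dominates_seqComp [Nonempty X₁] {D : Set (Y₀ × Y₁)}
    (hD : Dominates (seqComp R₀ R₁) D) :
    Dominates R₀ {y₀ | Dominates R₁ (Prod.mk y₀ ⁻¹' D)} := by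
  intro x
  by_contra! hx
  have hmiss : ∀ y₀, ∃ x₁, R₀ x y₀ → ∀ y₁, (y₀, y₁) ∈ D → ¬ R₁ x₁ y₁ := by
    intro y₀
    by_cases hxy₀ : R₀ x y₀
    · obtain ⟨x₁, hx₁⟩ := not_forall.mp fun h => hx y₀ h hxy₀
      exact ⟨x₁, fun _ y₁ hy h₁ => hx₁ ⟨y₁, hy, h₁⟩⟩
    · exact ⟨Classical.arbitrary X₁, (absurd · hxy₀)⟩
  choose f hf using hmiss
  obtain ⟨⟨y₀, y₁⟩, hy, hxy₀, hfy₀⟩ := hD (x, f)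
  exact hf y₀ hxy₀ y₁ hy hfy₀

theorem exists_dominates_of_dominates_seqComp [Nonempty X₀] [Nonempty X₁] {D : Set (Y₀ × Y₁)}
    (hD : Dominates (seqComp R₀ R₁) D) : (∃ D₀, Dominates R₀ D₀) ∧ ∃ D₁, Dominates R₁ D₁ := by
  have hA := dominates_fibres_of_dominates_seqComp hD
  obtain ⟨y₀, hy₀, -⟩ := hA (Classical.arbitrary X₀)
  exact ⟨⟨_, hA⟩, ⟨_, hy₀⟩⟩

theorem domNum_seqComp_le {D₀ : Set Y₀} {D₁ : Set Y₁} (h₀ : Dominates R₀ D₀)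
    (h₁ : Dominates R₁ D₁) : domNum (seqComp R₀ R₁) ≤ domNum R₀ * domNum R₁ := by
  obtain ⟨E₀, hE₀, hE₀card⟩ := exists_dominates_mk_eq_domNum h₀
  obtain ⟨E₁, hE₁, hE₁card⟩ := exists_dominates_mk_eq_domNum h₁
  calc domNum (seqComp R₀ R₁) ≤ #(E₀ ×ˢ E₁ : Set (Y₀ × Y₁)) :=
        domNum_le_mk (dominates_seqComp_prod hE₀ hE₁)
    _ = domNum R₀ * domNum R₁ := by rw [mk_setProd, hE₀card, hE₁card]

theorem mul_domNum_le_mk_of_dominates_seqComp [Nonempty X₁] {D : Set (Y₀ × Y₁)}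
    (hD : Dominates (seqComp R₀ R₁) D) : domNum R₀ * domNum R₁ ≤ #D := by
  set A := {y₀ | Dominates R₁ (Prod.mk y₀ ⁻¹' D)}
  have hinj : Function.Injective fun z : Σ y₀ : A, Prod.mk y₀.1 ⁻¹' D =>
      (⟨(z.1.1, z.2.1), z.2.2⟩ : D) := by
    rintro ⟨⟨y₀, _⟩, ⟨y₁, _⟩⟩ ⟨⟨y₀', _⟩, ⟨y₁', _⟩⟩ h
    simp only [Subtype.mk.injEq, Prod.mk.injEq] at h
    obtain ⟨rfl, rfl⟩ := h
    rfl
  calc domNum R₀ * domNum R₁ ≤ #A * domNum R₁ := by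
        gcongr; exact domNum_le_mk (dominates_fibres_of_dominates_seqComp hD)
    _ = sum fun _ : A => domNum R₁ := (sum_const' _ _).symm
    _ ≤ sum fun y₀ : A => #(Prod.mk y₀.1 ⁻¹' D) := sum_le_sum _ _ fun y₀ => domNum_le_mk y₀.2
    _ = #(Σ y₀ : A, Prod.mk y₀.1 ⁻¹' D) := (mk_sigma _).symm
    _ ≤ #D := mk_le_of_injective hinj

end SeqComp

theorem domNum_comp_general {X₀ Y₀ X₁ Y₁ : Type u}
    [Nonempty X₀] [Nonempty X₁]
    (R₀ : X₀ → Y₀ → Prop) (R₁ : X₁ → Y₁ → Prop) :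
    domNum (fun (p : X₀ × (Y₀ → X₁)) (q : Y₀ × Y₁) => R₀ p.1 q.1 ∧ R₁ (p.2 q.1) q.2)
      = domNum R₀ * domNum R₁ := by
  change domNum (seqComp R₀ R₁) = _
  by_cases h : (∃ D₀, Dominates R₀ D₀) ∧ ∃ D₁, Dominates R₁ D₁
  · obtain ⟨⟨D₀, h₀⟩, ⟨D₁, h₁⟩⟩ := h
    exact le_antisymm (domNum_seqComp_le h₀ h₁)
      (le_domNum (dominates_seqComp_prod h₀ h₁) fun _ => mul_domNum_le_mk_of_dominates_seqComp)
  -- Without a dominating set, `domNum` takes the junk value `sInf ∅ = 0` on both sides.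
  · rw [domNum_eq_zero_of_not_exists_dominates
      fun ⟨_, hD⟩ => h (exists_dominates_of_dominates_seqComp hD)]
    rcases not_and_or.mp h with h₀ | h₁
    · rw [domNum_eq_zero_of_not_exists_dominates h₀, zero_mul]
    · rw [domNum_eq_zero_of_not_exists_dominates h₁, mul_zero]

/-- 𝔡(R₀; R₁) = 𝔡(R₀) · 𝔡(R₁): the dominating number of the composition
(R₀; R₁) = ⟨X₀ × X₁^{Y₀}, Y₀ × Y₁, ⊏*⟩ of two relational systems equals the
cardinal product of the dominating numbers. -/
theorem domNum_comp {X₀ Y₀ X₁ Y₁ : Type u}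
    [Nonempty X₀] [Nonempty Y₀] [Nonempty X₁] [Nonempty Y₁]
    (R₀ : X₀ → Y₀ → Prop) (R₁ : X₁ → Y₁ → Prop) :
    domNum (fun (p : X₀ × (Y₀ → X₁)) (q : Y₀ × Y₁) => R₀ p.1 q.1 ∧ R₁ (p.2 q.1) q.2)
      = domNum R₀ * domNum R₁ :=
  domNum_comp_general R₀ R₁
end

section
/- Let C be a countable set and f : C → [0,1]. Then there exists a family ⟨K_i : i ∈ C⟩ of clopen subsets of Baire space ω^ω (with product measure Lb_ω, where μ_ω({k}) = 2^{-(k+1)}) such that Lb_ω(K_i) = f(i) for all i, and the family is probabilistically independent: for every finite F ⊆ C, Lb_ω(⋂_{i∈F} K_i) = ∏_{i∈F} Lb_ω(K_i). -/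
open MeasureTheory ProbabilityTheory

/-!
The cylinder condition says that `μ` is the infinite product of geometric distributions with
parameter `1/2`, so the coordinate maps are independent. Every `r ∈ [0, 1]` is the measure of the
set of positions of the digit `1` in a binary expansion of `r`; for an injection `n : C → ℕ` the
sets `K i = {x | x (n i) ∈ A i}` then work, being preimages under distinct coordinates.
-/

noncomputable def unitInterval.half : unitInterval := ⟨2⁻¹, by norm_num, by norm_num⟩

lemma geometricMeasure_half_singleton (n : ℕ) :
    geometricMeasure unitInterval.half {n} = 2⁻¹ ^ (n + 1) := by
  rw [geometricMeasure_singleton (by simp [unitInterval.half, ← Subtype.coe_ne_coe])]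
  norm_num [unitInterval.half, ← pow_succ, ENNReal.ofReal_div_of_pos]

lemma exists_geometricMeasure_half_eq {r : ℝ} (hr : r ∈ Set.Icc 0 1) :
    ∃ A : Set ℕ, geometricMeasure unitInterval.half A = ENNReal.ofReal r := by
  obtain ⟨d, -, rfl⟩ := Real.ofDigits_SurjOn one_lt_two hr
  refine ⟨{n | d n = 1}, ?_⟩
  have hterm : ∀ n, {n | d n = 1}.indicator (fun n => geometricMeasure unitInterval.half {n}) n
      = ENNReal.ofReal (Real.ofDigitsTerm d n) := by
    intro n
    simp only [Real.ofDigitsTerm, geometricMeasure_half_singleton]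
    rcases Fin.exists_fin_two.mp ⟨d n, rfl⟩ with h | h <;> simp [h, Set.indicator, ENNReal.inv_pow]
  rw [← Measure.tsum_indicator_apply_singleton _ _ (.of_discrete), Real.ofDigits,
    ENNReal.ofReal_tsum_of_nonneg (fun _ => Real.ofDigitsTerm_nonneg) Real.summable_ofDigitsTerm]
  simp only [hterm]

theorem eq_infinitePi_of_cylinder {X : Type*} [MeasurableSpace X] [Countable X]
    [MeasurableSingletonClass X] (ν : Measure X) [IsProbabilityMeasure ν] (μ : Measure (ℕ → X))
    (h : ∀ (N : ℕ) (s : Fin N → X), μ {x | ∀ i : Fin N, x i = s i} = ∏ i, ν {s i}) :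
    μ = Measure.infinitePi (fun _ => ν) := by
  refine ((Measure.isProjectiveLimit_infinitePi _).unique fun I => ?_).symm
  -- `range N → X` is countable, so the marginal on `range N` is determined by singletons.
  obtain ⟨N, hI⟩ := I.exists_nat_subset_range
  have hN : μ.map (Finset.range N).restrict = Measure.pi fun _ => ν := by
    refine Measure.ext_of_singleton fun s => ?_
    have hpre : (Finset.range N).restrict ⁻¹' ({s} : Set (Finset.range N → X))
        = {x : ℕ → X | ∀ i : Fin N, x i = s ⟨i, Finset.mem_range.2 i.2⟩} := by
      ext x
      simp [funext_iff, Fin.forall_iff]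
    rw [Measure.map_apply (Finset.measurable_restrict _) (.singleton s), hpre, h,
      Measure.pi_singleton]
    refine Fintype.prod_bijective (fun i => ⟨i, Finset.mem_range.2 i.2⟩) ⟨?_, ?_⟩ _ _ fun _ => rfl
    · intro i j hij
      exact Fin.ext (congrArg Subtype.val hij)
    · rintro ⟨i, hi⟩
      exact ⟨⟨i, Finset.mem_range.1 hi⟩, rfl⟩
  rw [← Finset.restrict₂_comp_restrict hI, ← Measure.map_map (Finset.measurable_restrict₂ hI)
    (Finset.measurable_restrict _), hN]
  exact (isProjectiveMeasureFamily_pi (fun _ => ν) _ _ hI).symm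

theorem exists_independent_clopen_family_general {C : Type*} [Countable C]
    (μ : Measure (ℕ → ℕ))
    (hμ : ∀ (k : ℕ) (s : Fin k → ℕ),
      μ {x : ℕ → ℕ | ∀ i : Fin k, x i = s i} = ∏ i : Fin k, ((2 : ENNReal)⁻¹) ^ (s i + 1))
    (f : C → ℝ) (hf : ∀ i, f i ∈ Set.Icc (0 : ℝ) 1) :
    ∃ K : C → Set (ℕ → ℕ),
      (∀ i, IsClopen (K i)) ∧
      (∀ i, μ (K i) = ENNReal.ofReal (f i)) ∧
      (∀ F : Finset C, μ (⋂ i ∈ F, K i) = ∏ i ∈ F, μ (K i)) := by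
  obtain ⟨n, hn⟩ := exists_injective_nat C
  choose A hA using fun i => exists_geometricMeasure_half_eq (hf i)
  have hμ_eq : μ = Measure.infinitePi fun _ => geometricMeasure unitInterval.half :=
    eq_infinitePi_of_cylinder _ μ (by simpa only [geometricMeasure_half_singleton] using hμ)
  have hindep : iIndepFun (fun i (x : ℕ → ℕ) => x (n i)) μ := by
    rw [hμ_eq]
    exact (iIndepFun_infinitePi (X := fun _ => id) fun _ => measurable_id).precomp hn
  refine ⟨fun i => (fun x => x (n i)) ⁻¹' A i,
    fun i => (isClopen_discrete _).preimage (continuous_apply _), fun i => ?_,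
    fun F => hindep.measure_inter_preimage_eq_mul F fun _ _ => .of_discrete⟩
  rw [← hA, hμ_eq, ← Measure.map_apply (measurable_pi_apply _) .of_discrete,
    Measure.infinitePi_map_eval]

/-- Let C be a countable set and f : C → [0,1]. For the product probability measure
Lb_ω on Baire space ω^ω (with coordinate measure μ_ω({k}) = 2^{-(k+1)}), there is a
family ⟨K_i : i ∈ C⟩ of clopen subsets of ω^ω with Lb_ω(K_i) = f(i) which is
probabilistically independent: Lb_ω(⋂_{i∈F} K_i) = ∏_{i∈F} Lb_ω(K_i) for every
finite F ⊆ C. -/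
theorem exists_independent_clopen_family {C : Type*} [Countable C]
    (μ : Measure (ℕ → ℕ)) [IsProbabilityMeasure μ]
    (hμ : ∀ (k : ℕ) (s : Fin k → ℕ),
      μ {x : ℕ → ℕ | ∀ i : Fin k, x i = s i} = ∏ i : Fin k, ((2 : ENNReal)⁻¹) ^ (s i + 1))
    (f : C → ℝ) (hf : ∀ i, f i ∈ Set.Icc (0 : ℝ) 1) :
    ∃ K : C → Set (ℕ → ℕ),
      (∀ i, IsClopen (K i)) ∧
      (∀ i, μ (K i) = ENNReal.ofReal (f i)) ∧
      (∀ F : Finset C, μ (⋂ i ∈ F, K i) = ∏ i ∈ F, μ (K i)) :=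
  exists_independent_clopen_family_general μ hμ f hf
end

section
/- Let b : ℕ → Set (each b(n) a nonempty countable set) and h, h⁺ : ℕ → ℕ. Suppose I = ⟨I_k : k < ω⟩ is an interval partition of ℕ such that h(i) ≥ h⁺(k) for all k and all i ∈ I_k, and define b⁺(k) := ∏_{i∈I_k} b(i). Then Lc(b,h) ≼_T Lc(b⁺,h⁺): there exist Ψ₋ : ∏b → ∏b⁺ and Ψ₊ : S(b⁺,h⁺) → S(b,h) such that Ψ₋(x) ∈* S implies x ∈* Ψ₊(S). -/
/-!
Ψ₋ cuts `x` into its blocks `x ↾ I_k`, and Ψ₊ sends a slalom `S` of block-functions to its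
projections: for `n ∈ I_k` the set `{f n : f ∈ S k}` has at most `h⁺ k ≤ h n` elements.
Since the block index of `n` tends to infinity with `n`, eventual capture by `S` transfers.
-/

open Filter

theorem StrictMono.exists_mem_Ico_of_map_zero {e : ℕ → ℕ} (he : StrictMono e) (he0 : e 0 = 0)
    (n : ℕ) : ∃ k, n ∈ Set.Ico (e k) (e (k + 1)) := by
  induction n with
  | zero => exact ⟨0, he0.le, by have := he (Nat.lt_add_one 0); omega⟩
  | succ n ih =>
    obtain ⟨k, hk, hk'⟩ := ih
    rcases Nat.lt_or_ge (n + 1) (e (k + 1)) with hlt | hge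
    · exact ⟨k, by omega, hlt⟩
    · exact ⟨k + 1, hge, by have := he (Nat.lt_add_one (k + 1)); omega⟩

theorem StrictMono.tendsto_atTop_of_lt_map_succ {e : ℕ → ℕ} (he : StrictMono e) {k : ℕ → ℕ}
    (hk : ∀ n, n < e (k n + 1)) : Tendsto k atTop atTop :=
  tendsto_atTop_atTop.2 fun K =>
    ⟨e K, fun n hn => Nat.lt_succ_iff.1 (he.lt_iff_lt.1 (hn.trans_lt (hk n)))⟩

theorem lc_tukey_lc_pow_general {b : ℕ → Type*}
    (h hp : ℕ → ℕ) (e : ℕ → ℕ) (he0 : e 0 = 0) (hemono : StrictMono e)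
    (hh : ∀ k i, e k ≤ i → i < e (k + 1) → hp k ≤ h i) :
    ∃ (Ψm : (∀ n, b n) → (∀ k, (i : Set.Ico (e k) (e (k + 1))) → b i.1))
      (Ψp : {S : ∀ k, Finset ((i : Set.Ico (e k) (e (k + 1))) → b i.1) //
                ∀ k, (S k).card ≤ hp k} →
            {φ : ∀ n, Finset (b n) // ∀ n, (φ n).card ≤ h n}),
      ∀ x S, (∀ᶠ k in atTop, Ψm x k ∈ S.1 k) → (∀ᶠ n in atTop, x n ∈ (Ψp S).1 n) := by
  classical
  choose k hk using hemono.exists_mem_Ico_of_map_zero he0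
  have hk_tendsto : Tendsto k atTop atTop :=
    hemono.tendsto_atTop_of_lt_map_succ fun n => (hk n).2
  refine ⟨fun x _ i => x i,
    fun S => ⟨fun n => (S.1 (k n)).image fun f => f ⟨n, hk n⟩,
      fun n => Finset.card_image_le.trans ((S.2 (k n)).trans (hh _ _ (hk n).1 (hk n).2))⟩,
    fun x S hev => ?_⟩
  exact (hk_tendsto.eventually hev).mono fun n hn => Finset.mem_image.2 ⟨_, hn, rfl⟩

/-- Lc(b,h) ≼_T Lc(b⁺,h⁺): if I = ⟨I_k⟩ is an interval partition of ℕ (given by the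
strictly increasing sequence of endpoints e with e 0 = 0, so I_k = [e k, e (k+1)))
with h(i) ≥ h⁺(k) for all i ∈ I_k, and b⁺(k) := ∏_{i∈I_k} b(i), then there is a
Tukey connection (Ψ₋, Ψ₊) from the localization system Lc(b,h) into Lc(b⁺,h⁺). -/
theorem lc_tukey_lc_pow {b : ℕ → Type*} [∀ n, Nonempty (b n)] [∀ n, Countable (b n)]
    (h hp : ℕ → ℕ) (e : ℕ → ℕ) (he0 : e 0 = 0) (hemono : StrictMono e)
    (hh : ∀ k i, e k ≤ i → i < e (k + 1) → hp k ≤ h i) :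
    ∃ (Ψm : (∀ n, b n) → (∀ k, (i : Set.Ico (e k) (e (k + 1))) → b i.1))
      (Ψp : {S : ∀ k, Finset ((i : Set.Ico (e k) (e (k + 1))) → b i.1) //
                ∀ k, (S k).card ≤ hp k} →
            {φ : ∀ n, Finset (b n) // ∀ n, (φ n).card ≤ h n}),
      ∀ x S, (∀ᶠ k in atTop, Ψm x k ∈ S.1 k) → (∀ᶠ n in atTop, x n ∈ (Ψp S).1 n) :=
  lc_tukey_lc_pow_general h hp e he0 hemono hh
end

section
/- Let b be a sequence of nonempty sets, h⁺ : ℕ → ℕ with h⁺(n) ≥ 1 for all n, let I be the interval partition of ℕ with |I_n| = h⁺(n), and b⁺(n) := ∏_{k∈I_n} b(k). Then aLc(b⁺, h⁺) ≼_T Ed_b: there are maps F : S(b⁺,h⁺) → ∏b and G : ∏b → ∏b⁺ such that whenever G(y)(n) ∈ φ(n) for infinitely many n, then F(φ)(k) = y(k) for infinitely many k. -/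
/-!
Since `|φ(n)| ≤ h⁺(n) = |I_n|`, the candidates in `φ(n)` can be spread over the points of the
block `I_n`, one candidate per point. Let `F(φ)` guess, at each `k ∈ I_n`, the value at `k` of the
candidate placed at `k`, and let `G(y)(n)` be the restriction of `y` to `I_n`. Whenever
`y↾I_n ∈ φ(n)`, the guess is right at the point carrying `y↾I_n`; the blocks being disjoint,
infinitely many such `n` give infinitely many correct guesses.
-/

open Function

theorem Finset.exists_subset_range_of_card_le {α γ : Type*} [Fintype α] [Nonempty γ]
    (s : Finset γ) (hs : s.card ≤ Fintype.card α) : ∃ σ : α → γ, ↑s ⊆ Set.range σ := by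
  obtain ⟨f⟩ := Embedding.nonempty_of_card_le (α := s) (β := α) (by simpa using hs)
  exact ⟨extend f Subtype.val fun _ ↦ Classical.arbitrary γ,
    fun x hx ↦ ⟨f ⟨x, hx⟩, f.injective.extend_apply _ _ _⟩⟩

section Diagonal

variable {ι K : Type*} {b : K → Type*} [∀ k, Nonempty (b k)] {I : ι → Set K}

open Classical in
noncomputable def diagonalGuess (I : ι → Set K) (σ : ∀ n, I n → ∀ k : I n, b k) : ∀ k, b k :=
  fun k ↦ if h : ∃ n, k ∈ I n then σ h.choose ⟨k, h.choose_spec⟩ ⟨k, h.choose_spec⟩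
    else Classical.arbitrary _

theorem diagonalGuess_apply (hI : Pairwise (Disjoint on I)) (σ : ∀ n, I n → ∀ k : I n, b k)
    {n : ι} (k : I n) : diagonalGuess I σ k = σ n k k := by
  have hex : ∃ m, (k : K) ∈ I m := ⟨n, k.2⟩
  have hσ : ∀ m (hm : (k : K) ∈ I m), m = n → σ m ⟨k, hm⟩ ⟨k, hm⟩ = σ n k k := by
    rintro m hm rfl
    rfl
  rw [diagonalGuess, dif_pos hex]
  exact hσ _ _ (hI.eq (Set.not_disjoint_iff.mpr ⟨k, hex.choose_spec, k.2⟩))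

theorem infinite_setOf_diagonalGuess_eq (hI : Pairwise (Disjoint on I))
    (σ : ∀ n, I n → ∀ k : I n, b k) (y : ∀ k, b k)
    (hy : {n | (fun k : I n ↦ y k) ∈ Set.range (σ n)}.Infinite) :
    {k | diagonalGuess I σ k = y k}.Infinite := by
  have := hy.to_subtype
  choose i hi using fun n : {n | (fun k : I n ↦ y k) ∈ Set.range (σ n)} ↦ n.2
  refine Set.infinite_of_injective_forall_mem (f := fun n ↦ (i n : K)) (fun n m hnm ↦ ?_) ?_
  · by_contra hne
    have hnm : (i n : K) = i m := hnm
    exact Set.disjoint_left.mp (hI (Subtype.coe_ne_coe.mpr hne)) (i n).2 (hnm ▸ (i m).2)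
  · intro n
    simp only [Set.mem_ofPred_eq, diagonalGuess_apply hI, hi n]

theorem Pairwise.exists_infinite_eq_of_infinite_restrict_mem (hI : Pairwise (Disjoint on I))
    [∀ n, Fintype (I n)] :
    ∃ F : {φ : ∀ n, Finset ((k : I n) → b k) // ∀ n, (φ n).card ≤ Fintype.card (I n)} →
        ∀ k, b k,
      ∀ φ (y : ∀ k, b k), {n | (fun k : I n ↦ y k) ∈ φ.1 n}.Infinite →
        {k | F φ k = y k}.Infinite := by
  choose σ hσ using fun (φ : {φ : ∀ n, Finset ((k : I n) → b k) //
    ∀ n, (φ n).card ≤ Fintype.card (I n)}) n ↦ (φ.1 n).exists_subset_range_of_card_le (φ.2 n)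
  exact ⟨fun φ ↦ diagonalGuess I (σ φ), fun φ y hy ↦
    infinite_setOf_diagonalGuess_eq hI (σ φ) y (hy.mono fun n hn ↦ hσ φ n hn)⟩

end Diagonal

theorem alc_pow_tukey_ed_general {b : ℕ → Type*} [∀ n, Nonempty (b n)]
    (hp : ℕ → ℕ)
    (e : ℕ → ℕ) (hee : ∀ n, e (n + 1) = e n + hp n) :
    ∃ (F : {φ : ∀ n, Finset ((k : Set.Ico (e n) (e (n + 1))) → b k.1) //
              ∀ n, (φ n).card ≤ hp n} → (∀ k, b k))
      (G : (∀ k, b k) → (∀ n, (k : Set.Ico (e n) (e (n + 1))) → b k.1)),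
      ∀ φ y, {n | G y n ∈ φ.1 n}.Infinite → {k | F φ k = y k}.Infinite := by
  have he : Monotone e := monotone_nat_of_le_succ fun n ↦ (hee n).symm ▸ Nat.le_add_right _ _
  obtain ⟨F, hF⟩ := he.pairwise_disjoint_on_Ico_succ.exists_infinite_eq_of_infinite_restrict_mem
    (b := b)
  exact ⟨fun φ ↦ F ⟨φ.1, fun n ↦ by simpa [hee] using φ.2 n⟩, fun y n k ↦ y k,
    fun φ y hy ↦ hF _ y hy⟩

/-- aLc(b⁺,h⁺) ≼_T Ed_b: if h⁺ ≥ 1, I is the interval partition of ℕ with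
|I_n| = h⁺(n) (endpoints e with e 0 = 0 and e (n+1) = e n + h⁺ n), and
b⁺(n) := ∏_{k∈I_n} b(k), then there are maps F : S(b⁺,h⁺) → ∏b and
G : ∏b → ∏b⁺ such that whenever G(y)(n) ∈ φ(n) for infinitely many n,
F(φ)(k) = y(k) for infinitely many k. -/
theorem alc_pow_tukey_ed {b : ℕ → Type*} [∀ n, Nonempty (b n)]
    (hp : ℕ → ℕ) (hhp : ∀ n, 1 ≤ hp n)
    (e : ℕ → ℕ) (he0 : e 0 = 0) (hee : ∀ n, e (n + 1) = e n + hp n) :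
    ∃ (F : {φ : ∀ n, Finset ((k : Set.Ico (e n) (e (n + 1))) → b k.1) //
              ∀ n, (φ n).card ≤ hp n} → (∀ k, b k))
      (G : (∀ k, b k) → (∀ n, (k : Set.Ico (e n) (e (n + 1))) → b k.1)),
      ∀ φ y, {n | G y n ∈ φ.1 n}.Infinite → {k | F φ k = y k}.Infinite :=
  alc_pow_tukey_ed_general hp e hee
end

section
/- Let b, h : ℕ → ℕ with b(n) ≥ 1 and h(n) ≥ 1 for all n, and define d(n) := ⌈b(n)/h(n)⌉. Then Ed_d ≼_T aLc(b,h): there exist Ψ₋ : ∏d → S(b,h) and Ψ₊ : ∏b → ∏d such that for all x ∈ ∏d and y ∈ ∏b, if y(n) ∈ Ψ₋(x)(n) for only finitely many n, then Ψ₊(y)(n) = x(n) for only finitely many n. -/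
/-!
Cut each `b n = {0, …, b n - 1}` into `d n = ⌈b n / h n⌉` consecutive blocks of length `h n`
and send `k` to the index `k / h n` of its block. Taking `Ψ₊ y` to be the sequence of block
indices of `y` and `Ψ₋ x` the sequence of blocks named by `x`, we get `Ψ₊ y n = x n`
exactly when `y n ∈ Ψ₋ x n`; more generally any coordinatewise map `∏b → ∏d` whose fibres
have size at most `h` is a Tukey connection.
-/

open Finset

theorem Nat.div_lt_ceilDiv {k b h : ℕ} (hh : 0 < h) (hk : k < b) : k / h < (b + h - 1) / h :=
  calc k / h < k / h + 1 := Nat.lt_succ_self _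
    _ = (k + h) / h := (Nat.add_div_right k hh).symm
    _ ≤ (b + h - 1) / h := Nat.div_le_div_right (by omega)

theorem Fin.card_filter_div_eq_le {b h : ℕ} (hh : 0 < h) (q : ℕ) :
    #{k : Fin b | (k : ℕ) / h = q} ≤ h := by
  refine (card_le_card_of_injOn (t := Ico (q * h) (q * h + h)) Fin.val (fun k hk => ?_)
    Fin.val_injective.injOn).trans (by simp)
  have := (Nat.div_eq_iff hh).1 (mem_filter.1 hk).2
  simp only [coe_Ico, Set.mem_Ico]
  omega

theorem exists_tukey_of_card_fiber_le {b d h : ℕ → ℕ} (f : ∀ n, Fin (b n) → Fin (d n))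
    (hf : ∀ n q, #{k | f n k = q} ≤ h n) :
    ∃ (Ψm : (∀ n, Fin (d n)) → {φ : ∀ n, Finset (Fin (b n)) // ∀ n, (φ n).card ≤ h n})
      (Ψp : (∀ n, Fin (b n)) → (∀ n, Fin (d n))),
      ∀ (x : ∀ n, Fin (d n)) (y : ∀ n, Fin (b n)),
        {n | y n ∈ (Ψm x).1 n}.Finite → {n | Ψp y n = x n}.Finite :=
  ⟨fun x => ⟨fun n => {k | f n k = x n}, fun n => hf n (x n)⟩, fun y n => f n (y n),
    fun _ _ hfin => hfin.subset fun _ hn => by simpa using hn⟩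

theorem ed_tukey_alc_general (b h : ℕ → ℕ) (hh : ∀ n, 1 ≤ h n)
    (d : ℕ → ℕ) (hd : ∀ n, d n = (b n + h n - 1) / h n) :
    ∃ (Ψm : (∀ n, Fin (d n)) → {φ : ∀ n, Finset (Fin (b n)) // ∀ n, (φ n).card ≤ h n})
      (Ψp : (∀ n, Fin (b n)) → (∀ n, Fin (d n))),
      ∀ (x : ∀ n, Fin (d n)) (y : ∀ n, Fin (b n)),
        {n | y n ∈ (Ψm x).1 n}.Finite → {n | Ψp y n = x n}.Finite := by
  let blockIndex (n : ℕ) (k : Fin (b n)) : Fin (d n) :=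
    ⟨k / h n, hd n ▸ Nat.div_lt_ceilDiv (hh n) k.2⟩
  refine exists_tukey_of_card_fiber_le blockIndex fun n q => ?_
  calc #{k | blockIndex n k = q} = #{k : Fin (b n) | (k : ℕ) / h n = q} := by
        simp only [blockIndex, Fin.ext_iff]
    _ ≤ h n := Fin.card_filter_div_eq_le (hh n) q

/-- Ed_d ≼_T aLc(b,h) where d(n) = ⌈b(n)/h(n)⌉: there are maps
Ψ₋ : ∏d → S(b,h) and Ψ₊ : ∏b → ∏d such that for all x ∈ ∏d and y ∈ ∏b, if
y(n) ∈ Ψ₋(x)(n) for only finitely many n, then Ψ₊(y)(n) = x(n) for only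
finitely many n. -/
theorem ed_tukey_alc (b h : ℕ → ℕ) (hb : ∀ n, 1 ≤ b n) (hh : ∀ n, 1 ≤ h n)
    (d : ℕ → ℕ) (hd : ∀ n, d n = (b n + h n - 1) / h n) :
    ∃ (Ψm : (∀ n, Fin (d n)) → {φ : ∀ n, Finset (Fin (b n)) // ∀ n, (φ n).card ≤ h n})
      (Ψp : (∀ n, Fin (b n)) → (∀ n, Fin (d n))),
      ∀ (x : ∀ n, Fin (d n)) (y : ∀ n, Fin (b n)),
        {n | y n ∈ (Ψm x).1 n}.Finite → {n | Ψp y n = x n}.Finite :=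
  ed_tukey_alc_general b h hh d hd
end

section
/- Let p(n) := 2^n and 0 < N < ω. Then the dominating number of the localization system Lc(p, N) equals the continuum: no family of fewer than 𝔠 slaloms φ ∈ ∏_n [2^n]^{≤N} suffices to localize (x ∈* φ) every x ∈ ∏_n 2^n. -/
/-!
The branches `binaryPrefix z = (z ↾ n)ₙ` of the binary tree are `𝔠` pairwise eventually
different elements of `∏ₙ 2ⁿ`. A slalom of width `N` localizes at most `N` pairwise eventually
different functions, since at a common large level they would be distinct members of a set of
size at most `N`. Hence a localizing family `S` covers the `𝔠` branches with finite fibres, so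
`𝔠 ≤ #S * ℵ₀` and `𝔠 ≤ #S`. Conversely the singleton slaloms localize everything, and there are
at most `𝔠` slaloms, being points of a countable product of countable sets.
-/

open Cardinal Filter

section Localization

universe u

variable {β : ℕ → Type u} {ι : Type u} {N : ℕ}

theorem card_le_of_eventually_mem_slalom {φ : ∀ n, Finset (β n)} (hφ : ∀ n, (φ n).card ≤ N)
    {x : ι → ∀ n, β n} (hx : Pairwise fun i j => ∀ᶠ n in atTop, x i n ≠ x j n) (t : Finset ι)
    (ht : ∀ i ∈ t, ∀ᶠ n in atTop, x i n ∈ φ n) : t.card ≤ N := by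
  have hne : ∀ i ∈ t, ∀ j ∈ t, ∀ᶠ n in atTop, i ≠ j → x i n ≠ x j n := fun i _ j _ => by
    by_cases hij : i = j
    · exact .of_forall fun _ h => absurd hij h
    · exact (hx hij).mono fun _ h _ => h
  obtain ⟨n, hmem, hinj⟩ := ((eventually_all_finset t).2 ht).and
    ((eventually_all_finset t).2 fun i hi => (eventually_all_finset t).2 (hne i hi)) |>.exists
  calc t.card ≤ (φ n).card :=
        Finset.card_le_card_of_injOn (x · n) hmem fun i hi j hj hxij => by
          by_contra hij; exact hinj i hi j hj hij hxij
    _ ≤ N := hφ n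

theorem finite_setOf_eventually_mem_slalom {φ : ∀ n, Finset (β n)} (hφ : ∀ n, (φ n).card ≤ N)
    {x : ι → ∀ n, β n} (hx : Pairwise fun i j => ∀ᶠ n in atTop, x i n ≠ x j n) :
    {i | ∀ᶠ n in atTop, x i n ∈ φ n}.Finite := by
  by_contra hinf
  obtain ⟨t, hts, htcard⟩ := Set.Infinite.exists_subset_card_eq hinf (N + 1)
  have := card_le_of_eventually_mem_slalom hφ hx t fun i hi => hts hi
  omega

theorem mk_le_mk_mul_aleph0_of_forall_exists_slalom
    {S : Set {φ : ∀ n, Finset (β n) // ∀ n, (φ n).card ≤ N}}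
    {x : ι → ∀ n, β n} (hx : Pairwise fun i j => ∀ᶠ n in atTop, x i n ≠ x j n)
    (hS : ∀ i, ∃ φ ∈ S, ∀ᶠ n in atTop, x i n ∈ φ.1 n) : #ι ≤ #S * ℵ₀ := by
  choose φ hφS hφ using hS
  refine mk_le_mk_mul_of_mk_preimage_le (fun i => (⟨φ i, hφS i⟩ : S)) fun ψ => ?_
  have hfin := finite_setOf_eventually_mem_slalom ψ.1.2 hx
  have : Countable ((fun i => (⟨φ i, hφS i⟩ : S)) ⁻¹' {ψ}) := by
    refine (hfin.subset ?_).countable.to_subtype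
    rintro i rfl
    exact hφ i
  exact mk_le_aleph0

end Localization

theorem mk_pi_nat_le_continuum {β : ℕ → Type*} [∀ n, Countable (β n)] :
    #(∀ n, β n) ≤ 𝔠 := by
  calc #(∀ n, β n) = prod fun n => #(β n) := mk_pi β
    _ ≤ prod fun _ : ℕ => ℵ₀ := prod_le_prod _ _ fun _ => mk_le_aleph0
    _ = 𝔠 := by simp [prod_const]

def binaryPrefix (z : ℕ → Bool) (n : ℕ) : Fin n → Bool := fun i => z i

theorem pairwise_eventually_ne_binaryPrefix :
    Pairwise fun z w : ℕ → Bool => ∀ᶠ n in atTop, binaryPrefix z n ≠ binaryPrefix w n := by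
  intro z w hzw
  obtain ⟨m, hm⟩ := Function.ne_iff.1 hzw
  filter_upwards [eventually_gt_atTop m] with n hn h
  exact hm (congrFun h ⟨m, hn⟩)

/-- For p(n) = 2^n (identified with the set of binary sequences of length n) and
0 < N < ω, the dominating number 𝔡^Lc_{p,N} of the localization system Lc(p,N)
equals the continuum: the least cardinality of a family S of slaloms
φ ∈ ∏_n [2^n]^{≤N} such that every x ∈ ∏_n 2^n is localized (x ∈* φ) by some
member of S is 𝔠. -/
theorem dLc_two_pow_eq_continuum (N : ℕ) (hN : 0 < N) :
    sInf { c : Cardinal |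
      ∃ S : Set {φ : ∀ n, Finset (Fin n → Bool) // ∀ n, (φ n).card ≤ N},
        (∀ x : ∀ n, Fin n → Bool, ∃ φ ∈ S, ∀ᶠ n in atTop, x n ∈ φ.1 n) ∧ #S = c }
      = Cardinal.continuum := by
  have huniv (x : ∀ n, Fin n → Bool) : ∃ φ ∈ (Set.univ : Set {φ : ∀ n, Finset (Fin n → Bool) //
      ∀ n, (φ n).card ≤ N}), ∀ᶠ n in atTop, x n ∈ φ.1 n :=
    ⟨⟨fun n => {x n}, fun _ => (Finset.card_singleton _).trans_le hN⟩, trivial,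
      .of_forall fun _ => Finset.mem_singleton_self _⟩
  refine le_antisymm (le_trans (csInf_le' ⟨_, huniv, rfl⟩) ?_) (le_csInf ⟨_, _, huniv, rfl⟩ ?_)
  · exact mk_univ.trans_le <| (mk_subtype_le _).trans mk_pi_nat_le_continuum
  · rintro _ ⟨S, hS, rfl⟩
    have hcont : 𝔠 ≤ #S * ℵ₀ := by
      simpa using mk_le_mk_mul_aleph0_of_forall_exists_slalom pairwise_eventually_ne_binaryPrefix
        fun z => hS (binaryPrefix z)
    by_contra! hlt
    exact (mul_lt_of_lt aleph0_le_continuum hlt aleph0_lt_continuum).not_ge hcont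
end

section
/- For 2 ≤ N < ω, the localization dominating number 𝔡^Lc_{N,N−1} equals the continuum 𝔠: no family of fewer than 𝔠 slaloms φ with |φ(n)| ≤ N−1, φ(n) ⊆ {0,...,N−1}, localizes all of N^ω. -/
/-!
Enumerate the pairs `(l, ψ)` with `ψ : (Fin l → Fin N) → Fin N` so that every pair recurs
infinitely often, and code `z : ℕ → Fin N` as `n ↦ ψₙ (z ↾ lₙ)`. Finitely many distinct
sequences are told apart by a finite prefix, so the codes of any `N` distinct sequences
infinitely often take all `N` values at the same place; a slalom of width `N - 1` therefore localizes the codes of only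
finitely many sequences. A localizing family thus covers the `𝔠` sequences by as many finite
sets as it has members, so it has at least `𝔠` members. The family of all slaloms has at most
`𝔠` members and localizes everything.
-/

open Cardinal Filter Function

universe u

theorem exists_nat_seq_infinite_fibers (T : Type*) [Countable T] [Nonempty T] :
    ∃ d : ℕ → T, ∀ t, {n | d n = t}.Infinite := by
  obtain ⟨f, hf⟩ := exists_surjective_nat T
  refine ⟨fun n => f n.unpair.2, fun t => ?_⟩
  obtain ⟨a, rfl⟩ := hf t
  refine Set.infinite_of_injective_forall_mem (f := fun k => Nat.pair k a) ?_ fun k => ?_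
  · intro k k' h
    simpa [Nat.pair_eq_pair] using h
  · simp

theorem mk_nat_arrow_le_continuum (β : Type u) [Countable β] : #(ℕ → β) ≤ 𝔠 := by
  rw [mk_arrow, lift_id'.{0, u}, mk_nat, lift_aleph0, ← aleph0_power_aleph0]
  exact power_le_power_right mk_le_aleph0

theorem continuum_le_mk_of_iUnion_countable_eq_univ {ι X : Type u} (hX : 𝔠 ≤ #X)
    {A : ι → Set X} (hA : ∀ i, (A i).Countable) (hcover : ⋃ i, A i = Set.univ) : 𝔠 ≤ #ι := by
  by_contra! hι
  have hX_le : #X ≤ #ι * ℵ₀ :=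
    calc #X = #(⋃ i, A i) := by rw [hcover, mk_univ]
      _ ≤ #ι * ⨆ i, #(A i) := mk_iUnion_le A
      _ ≤ #ι * ℵ₀ := by gcongr; exact ciSup_le' fun i => mk_le_aleph0_iff.2 (hA i).to_subtype
  exact (hX.trans hX_le).not_gt (mul_lt_of_lt aleph0_le_continuum hι aleph0_lt_continuum)

section PrefixCode

variable {α : Type*}

def prefixCode (d : ℕ → Σ l, (Fin l → α) → α) (z : ℕ → α) (n : ℕ) : α :=
  (d n).2 fun j => z j

theorem exists_prefix_injective {ι : Type*} [Finite ι] {g : ι → ℕ → α} (hg : Injective g) :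
    ∃ l, Injective fun i (j : Fin l) => g i j := by
  have hsep : ∀ p : ι × ι, ∀ᶠ l in atTop, p.1 ≠ p.2 → ∃ j : Fin l, g p.1 j ≠ g p.2 j := by
    rintro ⟨i, i'⟩
    by_cases h : i = i'
    · exact .of_forall fun _ hne => (hne h).elim
    obtain ⟨k, hk⟩ := Function.ne_iff.1 (hg.ne h)
    filter_upwards [eventually_gt_atTop k] with l hl _ using ⟨⟨k, hl⟩, hk⟩
  obtain ⟨l, hl⟩ := (eventually_all.2 hsep).exists
  refine ⟨l, fun i i' h => by_contra fun hne => ?_⟩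
  obtain ⟨j, hj⟩ := hl (i, i') hne
  exact hj (congrFun h j)

theorem frequently_prefixCode_eq [Nonempty α] {d : ℕ → Σ l, (Fin l → α) → α}
    (hd : ∀ t, {n | d n = t}.Infinite) {ι : Type*} [Finite ι] {g : ι → ℕ → α}
    (hg : Injective g) (c : ι → α) :
    ∃ᶠ n in atTop, ∀ i, prefixCode d (g i) n = c i := by
  obtain ⟨l, hl⟩ := exists_prefix_injective hg
  refine Nat.frequently_atTop_iff_infinite.2
    ((hd ⟨l, extend (fun i (j : Fin l) => g i j) c fun _ => Classical.arbitrary α⟩).mono fun n hn i => ?_)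
  rw [prefixCode, show d n = _ from hn]
  exact hl.extend_apply c (fun _ => Classical.arbitrary α) i

theorem finite_setOf_eventually_prefixCode_mem [Finite α] {d : ℕ → Σ l, (Fin l → α) → α}
    (hd : ∀ t, {n | d n = t}.Infinite) {φ : ℕ → Set α} (hφ : ∀ᶠ n in atTop, φ n ≠ Set.univ) :
    {z | ∀ᶠ n in atTop, prefixCode d z n ∈ φ n}.Finite := by
  refine Set.not_infinite.1 fun hinf => ?_
  have : Nonempty α := ⟨hinf.nonempty.some 0⟩
  obtain ⟨k, ⟨e⟩⟩ := Finite.exists_equiv_fin α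
  set z := hinf.natEmbedding
  have hz : Injective fun a => (z (e a)).1 := fun a b h =>
    e.injective (Fin.val_injective (z.injective (Subtype.ext h)))
  have hloc : ∀ᶠ n in atTop, ∀ a, prefixCode d (z (e a)).1 n ∈ φ n :=
    eventually_all.2 fun a => (z (e a)).2
  obtain ⟨n, hcode, hmem, hne⟩ :=
    ((frequently_prefixCode_eq hd hz fun a => a).and_eventually (hloc.and hφ)).exists
  exact hne (Set.eq_univ_of_forall fun a => hcode a ▸ hmem a)

end PrefixCode

theorem continuum_le_mk_of_localizing {N : ℕ} (hN : 2 ≤ N)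
    (S : Set {φ : ℕ → Finset (Fin N) // ∀ n, (φ n).card ≤ N - 1})
    (hS : ∀ x : ℕ → Fin N, ∃ φ ∈ S, ∀ᶠ n in atTop, x n ∈ φ.1 n) : 𝔠 ≤ #S := by
  have : Nonempty (Fin N) := ⟨⟨0, by omega⟩⟩
  obtain ⟨d, hd⟩ := exists_nat_seq_infinite_fibers (Σ l, (Fin l → Fin N) → Fin N)
  have hφ (φ : S) : ∀ᶠ n in atTop, (φ.1.1 n : Set (Fin N)) ≠ Set.univ := .of_forall fun n h => by
    have := φ.1.2 n
    rw [Finset.coe_eq_univ.1 h, Finset.card_univ, Fintype.card_fin] at this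
    omega
  refine continuum_le_mk_of_iUnion_countable_eq_univ (X := ℕ → Fin N)
    (A := fun φ : S => {z | ∀ᶠ n in atTop, prefixCode d z n ∈ φ.1.1 n}) ?_
    (fun φ => (finite_setOf_eventually_prefixCode_mem hd (hφ φ)).countable) ?_
  · rw [mk_arrow, mk_fintype, Fintype.card_fin, mk_nat]
    simp [nat_power_aleph0 hN]
  · refine Set.eq_univ_of_forall fun z => ?_
    obtain ⟨φ, hφS, hzφ⟩ := hS (prefixCode d z)
    exact Set.mem_iUnion.2 ⟨⟨φ, hφS⟩, hzφ⟩

/-- For 2 ≤ N < ω, 𝔡^Lc_{N,N-1} = 𝔠: the least cardinality of a family S of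
slaloms φ : ℕ → [{0,…,N−1}]^{≤N−1} such that every x ∈ N^ω satisfies
x(n) ∈ φ(n) for all but finitely many n for some φ ∈ S, is the continuum. -/
theorem dLc_N_Nsub1_eq_continuum (N : ℕ) (hN : 2 ≤ N) :
    sInf { c : Cardinal |
      ∃ S : Set {φ : ℕ → Finset (Fin N) // ∀ n, (φ n).card ≤ N - 1},
        (∀ x : ℕ → Fin N, ∃ φ ∈ S, ∀ᶠ n in atTop, x n ∈ φ.1 n) ∧ #S = c }
      = Cardinal.continuum := by
  have hall : #(Set.univ : Set {φ : ℕ → Finset (Fin N) // ∀ n, (φ n).card ≤ N - 1}) ∈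
      { c : Cardinal | ∃ S : Set {φ : ℕ → Finset (Fin N) // ∀ n, (φ n).card ≤ N - 1},
        (∀ x : ℕ → Fin N, ∃ φ ∈ S, ∀ᶠ n in atTop, x n ∈ φ.1 n) ∧ #S = c } :=
    ⟨Set.univ, fun x => ⟨⟨fun n => {x n}, fun n => by simp; omega⟩, trivial,
      .of_forall fun n => Finset.mem_singleton_self _⟩, rfl⟩
  refine le_antisymm ((csInf_le' hall).trans ?_) (le_csInf ⟨_, hall⟩ ?_)
  · rw [mk_univ]
    exact (mk_subtype_le _).trans (mk_nat_arrow_le_continuum _)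
  · rintro _ ⟨S, hS, rfl⟩
    exact continuum_le_mk_of_localizing hN S hS
end

section
/- Suppose Σ_n h(n)/b(n) < ∞ where b, h : ℕ → ℕ, b(n) ≥ 1. Then for every slalom φ ∈ S(b,h), the set {x ∈ ∏b : x(n) ∈ φ(n) for infinitely many n} has measure zero with respect to the product of the uniform measures on the b(n). Consequently C_N ≼_T aLc(b,h)⊥, i.e., cov(N) ≤ 𝔟^aLc_{b,h} and 𝔡^aLc_{b,h} ≤ non(N). -/
/-!
The event `{x | x n ∈ φ n}` is covered by `|φ n| · ∏_{i<n} b i` cylinders of length `n + 1`, each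
of measure `∏_{i≤n} (b i)⁻¹`, so it has measure at most `|φ n| / b n`. These bounds are summable,
and Borel–Cantelli makes the set of reals caught infinitely often by `φ` null. Hence
`φ ↦ {x | x is caught infinitely often by φ}` sends a family of slaloms that no real evades to a
null cover of the same size, and a non-null set of reals contains, for each slalom, a real
evading it: `cov(N) ≤ 𝔟` and `𝔡 ≤ non(N)`.
-/

open MeasureTheory Cardinal Filter Set
open scoped ENNReal

section Cylinders

variable {α : ℕ → Type*} [∀ n, Fintype (α n)] [∀ n, MeasurableSpace (α n)]

def IsUniformOnCylinders (μ : Measure (∀ n, α n)) : Prop :=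
  ∀ (k : ℕ) (s : ∀ i : Fin k, α i),
    μ {x | ∀ i : Fin k, x i = s i} = ∏ i : Fin k, (Fintype.card (α i) : ℝ≥0∞)⁻¹

variable [∀ n, Nonempty (α n)] {μ : Measure (∀ n, α n)}

theorem IsUniformOnCylinders.measure_apply_eq_le (hμ : IsUniformOnCylinders μ) (n : ℕ)
    (v : α n) : μ {x | x n = v} ≤ (Fintype.card (α n) : ℝ≥0∞)⁻¹ := by
  have hcover : {x : ∀ m, α m | x n = v} ⊆ ⋃ t : (∀ i : Fin n, α i),
      {x | ∀ i : Fin (n + 1), x i = Fin.snoc (α := fun i : Fin (n + 1) => α i) t v i} := by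
    intro x hx
    refine mem_iUnion.2 ⟨fun i => x i, fun i => ?_⟩
    induction i using Fin.lastCases with
    | last => simpa using hx
    | cast i => simp
  have hcard_ne_zero : ∀ i, (Fintype.card (α i) : ℝ≥0∞) ≠ 0 := fun i => by simp
  calc μ {x | x n = v}
      ≤ ∑ t : (∀ i : Fin n, α i), ∏ i : Fin (n + 1), (Fintype.card (α i) : ℝ≥0∞)⁻¹ :=
        (measure_mono hcover).trans <| (measure_iUnion_fintype_le μ _).trans_eq <|
          Finset.sum_congr rfl fun t _ => hμ (n + 1) _
    _ = (Fintype.card (α n) : ℝ≥0∞)⁻¹ := by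
        rw [Finset.sum_const, Finset.card_univ, Fintype.card_pi, Fin.prod_univ_castSucc,
          nsmul_eq_mul, ← mul_assoc, Nat.cast_prod, ← Finset.prod_mul_distrib]
        simp [ENNReal.mul_inv_cancel (hcard_ne_zero _) (ENNReal.natCast_ne_top _)]

theorem IsUniformOnCylinders.measure_apply_mem_le (hμ : IsUniformOnCylinders μ) (n : ℕ)
    (t : Finset (α n)) : μ {x | x n ∈ t} ≤ t.card / Fintype.card (α n) := by
  calc μ {x | x n ∈ t} = μ (⋃ v ∈ t, {x | x n = v}) := by congr 1; ext; simp
    _ ≤ ∑ v ∈ t, μ {x | x n = v} := measure_biUnion_finset_le t _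
    _ ≤ ∑ _v ∈ t, (Fintype.card (α n) : ℝ≥0∞)⁻¹ :=
        Finset.sum_le_sum fun v _ => hμ.measure_apply_eq_le n v
    _ = t.card / Fintype.card (α n) := by rw [Finset.sum_const, nsmul_eq_mul, div_eq_mul_inv]

theorem IsUniformOnCylinders.measure_infinite_apply_mem_eq_zero (hμ : IsUniformOnCylinders μ)
    (φ : ∀ n, Finset (α n)) (hφ : ∑' n, ((φ n).card / Fintype.card (α n) : ℝ≥0∞) ≠ ∞) :
    μ {x | {n | x n ∈ φ n}.Infinite} = 0 := by
  have hlimsup : {x : ∀ m, α m | {n | x n ∈ φ n}.Infinite} =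
      limsup (fun n => {x | x n ∈ φ n}) atTop := by
    ext x
    simp only [mem_ofPred_eq, mem_limsup_iff_frequently_mem, Nat.frequently_atTop_iff_infinite]
  rw [hlimsup]
  exact measure_limsup_atTop_eq_zero <| ne_top_of_le_ne_top hφ <|
    ENNReal.tsum_le_tsum fun n => hμ.measure_apply_mem_le n (φ n)

end Cylinders

theorem tsum_natCast_div_ne_top_of_le {a h b : ℕ → ℕ} (hb : ∀ n, b n ≠ 0) (hah : ∀ n, a n ≤ h n)
    (hsum : Summable fun n => (h n : ℝ) / b n) : ∑' n, (a n / b n : ℝ≥0∞) ≠ ∞ :=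
  ne_top_of_le_ne_top hsum.tsum_ofReal_ne_top <| ENNReal.tsum_le_tsum fun n => by
    rw [ENNReal.ofReal_div_of_pos (by exact_mod_cast Nat.pos_of_ne_zero (hb n)),
      ENNReal.ofReal_natCast, ENNReal.ofReal_natCast]
    gcongr
    exact hah n

universe u v

section CardinalInvariants

variable {X : Type u} {Y : Type v}

noncomputable def covNull [MeasurableSpace X] (μ : Measure X) : Cardinal.{u} :=
  sInf {c | ∃ F : Set (Set X), (∀ A ∈ F, μ A = 0) ∧ ⋃₀ F = Set.univ ∧ #F = c}

noncomputable def nonNull [MeasurableSpace X] (μ : Measure X) : Cardinal.{u} :=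
  sInf {c | ∃ A : Set X, μ A ≠ 0 ∧ #A = c}

-- `𝔟` and `𝔡` of the relational system `⟨X, Y, R⟩`.
noncomputable def unboundingNumber (R : X → Y → Prop) : Cardinal.{u} :=
  sInf {c | ∃ F : Set X, (¬ ∃ y, ∀ x ∈ F, R x y) ∧ #F = c}

noncomputable def dominatingNumber (R : X → Y → Prop) : Cardinal.{v} :=
  sInf {c | ∃ D : Set Y, (∀ x, ∃ y ∈ D, R x y) ∧ #D = c}

theorem dominatingNumber_le_nonNull [MeasurableSpace Y] {μ : Measure Y} [NeZero μ]
    {R : X → Y → Prop} (hnull : ∀ x, μ {y | ¬ R x y} = 0) :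
    dominatingNumber R ≤ nonNull μ := by
  refine le_csInf ⟨_, Set.univ, by simpa using NeZero.ne μ, rfl⟩ ?_
  rintro _ ⟨A, hA, rfl⟩
  refine csInf_le' ⟨A, fun x => ?_, rfl⟩
  by_contra! hx
  exact hA (measure_mono_null hx (hnull x))

end CardinalInvariants

theorem covNull_le_unboundingNumber {X Y : Type u} [MeasurableSpace Y] {μ : Measure Y}
    {R : X → Y → Prop} (hnull : ∀ x, μ {y | ¬ R x y} = 0) (hcov : ∀ y, ∃ x, ¬ R x y) :
    covNull μ ≤ unboundingNumber R := by
  refine le_csInf ⟨_, Set.univ, fun ⟨y, hy⟩ => ?_, rfl⟩ ?_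
  · obtain ⟨x, hx⟩ := hcov y
    exact hx (hy x (mem_univ x))
  · rintro _ ⟨F, hF, rfl⟩
    simp only [not_exists, not_forall, exists_prop] at hF
    refine le_trans ?_ (mk_image_le (f := fun x => {y | ¬ R x y}) (s := F))
    refine csInf_le' ⟨_, ?_, ?_, rfl⟩
    · rintro _ ⟨x, -, rfl⟩
      exact hnull x
    · refine eq_univ_of_forall fun y => ?_
      obtain ⟨x, hxF, hxy⟩ := hF y
      exact ⟨_, mem_image_of_mem _ hxF, hxy⟩

/-- Suppose Σ_n h(n)/b(n) < ∞ (b(n) ≥ 1, h(n) ≥ 1) and let μ = Lb_b be the product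
of the uniform measures on {0,…,b(n)−1} on ∏b. Then:
(1) for every slalom φ ∈ S(b,h), the set {x ∈ ∏b : x(n) ∈ φ(n) for infinitely
many n} is μ-null; consequently C_N ≼_T aLc(b,h)⊥, in particular
(2) cov(N) ≤ 𝔟^aLc_{b,h} and (3) 𝔡^aLc_{b,h} ≤ non(N). -/
theorem alc_null_cov_non (b h : ℕ → ℕ) (hb : ∀ n, 1 ≤ b n) (hh : ∀ n, 1 ≤ h n)
    (hsum : Summable (fun n => (h n : ℝ) / (b n : ℝ)))
    (μ : Measure (∀ n, Fin (b n))) [IsProbabilityMeasure μ]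
    (hμ : ∀ (k : ℕ) (s : ∀ i : Fin k, Fin (b i)),
      μ {x : ∀ n, Fin (b n) | ∀ i : Fin k, x i = s i} = ∏ i : Fin k, ((b i : ENNReal))⁻¹) :
    (∀ φ : {φ : ∀ n, Finset (Fin (b n)) // ∀ n, (φ n).card ≤ h n},
        μ {x : ∀ n, Fin (b n) | {n | x n ∈ φ.1 n}.Infinite} = 0) ∧
    -- cov(N) ≤ 𝔟^aLc_{b,h}
    sInf { c : Cardinal | ∃ F : Set (Set (∀ n, Fin (b n))),
        (∀ A ∈ F, μ A = 0) ∧ ⋃₀ F = Set.univ ∧ #F = c }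
      ≤ sInf { c : Cardinal |
          ∃ Φ : Set {φ : ∀ n, Finset (Fin (b n)) // ∀ n, (φ n).card ≤ h n},
            (¬ ∃ y : ∀ n, Fin (b n), ∀ φ ∈ Φ, {n | y n ∈ φ.1 n}.Finite) ∧ #Φ = c } ∧
    -- 𝔡^aLc_{b,h} ≤ non(N)
    sInf { c : Cardinal | ∃ D : Set (∀ n, Fin (b n)),
        (∀ φ : {φ : ∀ n, Finset (Fin (b n)) // ∀ n, (φ n).card ≤ h n},
          ∃ y ∈ D, {n | y n ∈ φ.1 n}.Finite) ∧ #D = c }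
      ≤ sInf { c : Cardinal | ∃ A : Set (∀ n, Fin (b n)), μ A ≠ 0 ∧ #A = c } := by
  have hb₀ : ∀ n, b n ≠ 0 := fun n => Nat.one_le_iff_ne_zero.mp (hb n)
  have : ∀ n, NeZero (b n) := fun n => ⟨hb₀ n⟩
  have hμ' : IsUniformOnCylinders μ := fun k s => by simpa only [Fintype.card_fin] using hμ k s
  have hnull : ∀ φ : {φ : ∀ n, Finset (Fin (b n)) // ∀ n, (φ n).card ≤ h n},
      μ {x : ∀ n, Fin (b n) | {n | x n ∈ φ.1 n}.Infinite} = 0 := fun φ =>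
    hμ'.measure_infinite_apply_mem_eq_zero φ.1 <| by
      simpa only [Fintype.card_fin] using tsum_natCast_div_ne_top_of_le hb₀ φ.2 hsum
  refine ⟨hnull, covNull_le_unboundingNumber hnull fun y => ?_, dominatingNumber_le_nonNull hnull⟩
  exact ⟨⟨fun n => {y n}, fun n => by simpa using hh n⟩, by simp [Set.infinite_univ]⟩
end

section
/- Every F_σ measure-zero set C ⊆ 2^ω is contained in a set of the form H_{b̃,φ} := {x ∈ 2^ω : ∀^∞ n, x↾[b̃(n), b̃(n+1)) ∈ φ(n)} for some strictly increasing b̃ : ℕ → ℕ with b̃(0) = 0 and some φ with φ(n) ⊆ 2^{[b̃(n), b̃(n+1))} satisfying |φ(n)|/2^{b̃(n+1)−b̃(n)} ≤ 2^{−n} for all n. -/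
/-!
Write `C = ⋃ n, Gₙ` with `Gₙ` the closed null partial unions. By continuity from above, the
cylinders over the length-`m` prefixes of `Gₙ` have measure tending to `μ Gₙ = 0`, so `Gₙ` has
few prefixes for large `m`. Choose `b (n + 1)` so that the prefixes of `Gₙ` of length
`b (n + 1)` make up a fraction below `2^-(b n + n)` of all strings; restricting them to the block
`[b n, b (n + 1))` loses at most a factor `2^(b n)`, leaving `φ n` of relative size `≤ 2^-n`.
Every `x ∈ C` lies in `Gₙ` for all large `n`, so its `n`-th block lies in `φ n`.
-/

open MeasureTheory Filter Topology

section

variable {α : Type*}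

def seqPrefix (m : ℕ) (x : ℕ → α) : Fin m → α := fun i => x i

lemma preimage_seqPrefix_singleton (m : ℕ) (s : Fin m → α) :
    seqPrefix m ⁻¹' {s} = {x | ∀ i : Fin m, x i = s i} := by
  ext x
  simp [seqPrefix, funext_iff]

lemma measurable_seqPrefix [MeasurableSpace α] (m : ℕ) : Measurable (seqPrefix (α := α) m) :=
  measurable_pi_lambda _ fun i => measurable_pi_apply (i : ℕ)

lemma antitone_preimage_seqPrefix_image (K : Set (ℕ → α)) :
    Antitone fun m => seqPrefix m ⁻¹' (seqPrefix m '' K) := by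
  rintro m m' hm x ⟨y, hyK, hyx⟩
  exact ⟨y, hyK, funext fun i => congrFun hyx (Fin.castLE hm i)⟩

lemma IsClosed.iInter_preimage_seqPrefix_image [TopologicalSpace α] [DiscreteTopology α]
    {K : Set (ℕ → α)} (hK : IsClosed K) :
    ⋂ m, seqPrefix m ⁻¹' (seqPrefix m '' K) = K := by
  refine subset_antisymm (fun x hx => ?_) fun x hx => Set.mem_iInter.2 fun m => ⟨x, hx, rfl⟩
  choose y hyK hyx using Set.mem_iInter.1 hx
  have hy : Tendsto y atTop (𝓝 x) := by
    refine tendsto_pi_nhds.2 fun i => tendsto_const_nhds.congr' ?_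
    filter_upwards [eventually_gt_atTop i] with m hm
    exact (congrFun (hyx m) ⟨i, hm⟩).symm
  exact hK.mem_of_tendsto hy (Eventually.of_forall hyK)

lemma ncard_image_block_le [Finite α] {a c : ℕ} (hac : a ≤ c) (S : Set (ℕ → α)) :
    ((fun x : ℕ → α => fun i : Fin (c - a) => x (a + i)) '' S).ncard
      ≤ (seqPrefix c '' S).ncard := by
  have hblock : (fun x : ℕ → α => fun i : Fin (c - a) => x (a + i)) =
      (fun s : Fin c → α => fun i : Fin (c - a) => s ⟨a + i, by omega⟩) ∘ seqPrefix c := rfl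
  rw [hblock, Set.image_comp]
  exact Set.ncard_image_le

lemma ncard_image_block_div_le [Finite α] {a c n : ℕ} (hac : a ≤ c) {S : Set (ℕ → α)}
    (hS : ((seqPrefix c '' S).ncard : ℝ) / 2 ^ c ≤ 1 / 2 ^ (a + n)) :
    (((fun x : ℕ → α => fun i : Fin (c - a) => x (a + i)) '' S).ncard : ℝ) / 2 ^ (c - a)
      ≤ 1 / 2 ^ n := by
  have hc : (2 : ℝ) ^ c = 2 ^ (c - a) * 2 ^ a := by rw [← pow_add, Nat.sub_add_cancel hac]
  calc (((fun x : ℕ → α => fun i : Fin (c - a) => x (a + i)) '' S).ncard : ℝ) / 2 ^ (c - a)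
      ≤ (seqPrefix c '' S).ncard / 2 ^ (c - a) := by
        gcongr; exact_mod_cast ncard_image_block_le hac S
    _ = (seqPrefix c '' S).ncard / 2 ^ c * 2 ^ a := by
        rw [hc]; field_simp
    _ ≤ 1 / 2 ^ (a + n) * 2 ^ a := by gcongr
    _ = 1 / 2 ^ n := by rw [pow_add]; field_simp

lemma exists_strictMono_zero_of_eventually {Q : ℕ → ℕ → ℕ → Prop}
    (h : ∀ n a, ∀ᶠ m in atTop, Q n a m) :
    ∃ b : ℕ → ℕ, StrictMono b ∧ b 0 = 0 ∧ ∀ n, Q n (b n) (b (n + 1)) := by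
  choose next hnext using fun n a => ((h n a).and (eventually_gt_atTop a)).exists
  let b : ℕ → ℕ := fun n => Nat.rec 0 next n
  exact ⟨b, strictMono_nat_of_lt_succ fun n => (hnext n (b n)).2, rfl,
    fun n => (hnext n (b n)).1⟩

end

section CoinFlipping

variable {μ : Measure (ℕ → Bool)}

lemma measure_preimage_seqPrefix
    (hμ : ∀ m (s : Fin m → Bool), μ (seqPrefix m ⁻¹' {s}) = 2⁻¹ ^ m)
    {m : ℕ} (S : Set (Fin m → Bool)) :
    μ (seqPrefix m ⁻¹' S) = S.ncard * 2⁻¹ ^ m := by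
  obtain ⟨T, rfl⟩ := S.toFinite.exists_finset_coe
  rw [← sum_measure_preimage_singleton _ fun s _ =>
    measurable_seqPrefix m (MeasurableSet.singleton s)]
  simp [hμ]

lemma IsClosed.tendsto_measure_preimage_seqPrefix_image [IsFiniteMeasure μ] {K : Set (ℕ → Bool)}
    (hK : IsClosed K) :
    Tendsto (fun m => μ (seqPrefix m ⁻¹' (seqPrefix m '' K))) atTop (𝓝 (μ K)) := by
  have h := tendsto_measure_iInter_atTop (μ := μ)
    (fun m => ((measurable_seqPrefix m) (Set.toFinite _).measurableSet).nullMeasurableSet)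
    (antitone_preimage_seqPrefix_image K) ⟨0, measure_ne_top μ _⟩
  rwa [hK.iInter_preimage_seqPrefix_image] at h

lemma IsClosed.eventually_ncard_image_seqPrefix_div_lt [IsFiniteMeasure μ]
    (hμ : ∀ m (s : Fin m → Bool), μ (seqPrefix m ⁻¹' {s}) = 2⁻¹ ^ m)
    {K : Set (ℕ → Bool)} (hK : IsClosed K) (hK0 : μ K = 0) {ε : ℝ} (hε : 0 < ε) :
    ∀ᶠ m in atTop, ((seqPrefix m '' K).ncard : ℝ) / 2 ^ m < ε := by
  have h := (ENNReal.tendsto_toReal ENNReal.zero_ne_top).comp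
    (hK0 ▸ hK.tendsto_measure_preimage_seqPrefix_image (μ := μ))
  simp only [Function.comp_def, measure_preimage_seqPrefix hμ, ENNReal.toReal_mul,
    ENNReal.toReal_natCast, ENNReal.toReal_pow, ENNReal.toReal_inv, ENNReal.toReal_ofNat,
    ENNReal.toReal_zero, inv_pow, ← div_eq_mul_inv] at h
  exact h.eventually_lt_const hε

end CoinFlipping

/-- Every F_σ measure-zero set C ⊆ 2^ω is contained in a set of the form
H_{b̃,φ} = {x : ∀^∞ n, x↾[b̃(n), b̃(n+1)) ∈ φ(n)} for some strictly increasing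
b̃ with b̃(0) = 0 and some φ with φ(n) a set of binary sequences of length
b̃(n+1)−b̃(n) satisfying |φ(n)|/2^{b̃(n+1)−b̃(n)} ≤ 2^{−n} for all n. -/
theorem Fsigma_null_subset_H (μ : Measure (ℕ → Bool)) [IsProbabilityMeasure μ]
    (hμ : ∀ (n : ℕ) (s : Fin n → Bool),
      μ {x : ℕ → Bool | ∀ i : Fin n, x i = s i} = ((2 : ENNReal))⁻¹ ^ n)
    (C : Set (ℕ → Bool))
    (hC : ∃ F : ℕ → Set (ℕ → Bool), (∀ n, IsClosed (F n)) ∧ C = ⋃ n, F n)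
    (hC0 : μ C = 0) :
    ∃ (bt : ℕ → ℕ), StrictMono bt ∧ bt 0 = 0 ∧
      ∃ φ : ∀ n, Finset (Fin (bt (n + 1) - bt n) → Bool),
        (∀ n, ((φ n).card : ℝ) / 2 ^ (bt (n + 1) - bt n) ≤ 1 / 2 ^ n) ∧
        C ⊆ {x : ℕ → Bool | ∀ᶠ n in atTop,
              (fun i : Fin (bt (n + 1) - bt n) => x (bt n + i)) ∈ φ n} := by
  obtain ⟨F, hF, rfl⟩ := hC
  simp only [← preimage_seqPrefix_singleton] at hμ
  have hG : ∀ n, IsClosed (Set.accumulate F n) := fun n =>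
    (Set.finite_le_nat n).isClosed_biUnion fun k _ => hF k
  have hG0 : ∀ n, μ (Set.accumulate F n) = 0 := fun n =>
    measure_mono_null (Set.accumulate_subset_iUnion n) hC0
  obtain ⟨b, hb, hb0, hbG⟩ := exists_strictMono_zero_of_eventually
    fun n a => (hG n).eventually_ncard_image_seqPrefix_div_lt hμ (hG0 n)
      (one_div_pos.2 (pow_pos two_pos (a + n)))
  refine ⟨b, hb, hb0, fun n => (Set.toFinite
    ((fun x => fun i : Fin (b (n + 1) - b n) => x (b n + i)) '' Set.accumulate F n)).toFinset,
    fun n => ?_, fun x hx => ?_⟩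
  · rw [← Set.ncard_eq_toFinset_card]
    exact ncard_image_block_div_le (hb.monotone n.le_succ) (hbG n).le
  · obtain ⟨k, hk⟩ := Set.mem_iUnion.1 hx
    filter_upwards [eventually_ge_atTop k] with n hn
    exact (Set.Finite.mem_toFinset _).2 ⟨x, Set.mem_accumulate.2 ⟨k, hn, hk⟩, rfl⟩
end

section
/- Let 𝐭 = (L, φ, φ') be a 2-small coding with associated intervals I_k = [n_k, n_{k+1}) and I'_k = [m_k, m_{k+1}). Define S_k := {s ∈ 2^{[n_k,m_k)} : s has at least 2^{n_{k+1}−m_k−k} extensions inside φ(k)}. Then |S_k|/2^{m_k − n_k} < 1/2^{k+2} for all k. -/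
/-!
Restriction to `[n_k, m_k)` partitions `φ(k)` into fibres, and the fibre over each `s ∈ S_k` has at
least `2^{n_{k+1} - m_k - k}` elements, so `|S_k| · 2^{n_{k+1} - m_k - k} ≤ |φ(k)| < 2^{n_{k+1} - n_k} / 4^{k+1}`.
As `n_{k+1} - n_k ≤ (m_k - n_k) + (n_{k+1} - m_k - k) + k` and `4^{k+1} = 2^k · 2^{k+2}`, this gives
`|S_k| < 2^{m_k - n_k} / 2^{k+2}`.
-/

open Finset

theorem Finset.mul_card_le_card_of_le_card_fiber {α β : Type*} [DecidableEq β] {f : α → β}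
    {s : Finset α} {t : Finset β} (n : ℕ) (hn : ∀ b ∈ t, n ≤ #{a ∈ s | f a = b}) :
    n * #t ≤ #s :=
  calc n * #t = ∑ _b ∈ t, n := by rw [sum_const, smul_eq_mul, mul_comm]
    _ ≤ ∑ b ∈ t, #{a ∈ s | f a = b} := sum_le_sum hn
    _ = #{a ∈ s | f a ∈ t} := sum_card_fiberwise_eq_card_filter s t f
    _ ≤ #s := card_filter_le s _

theorem Nat.mul_two_pow_lt_of_mul_two_pow_le {a b d e k D : ℕ} (hab : a * 2 ^ e ≤ b)
    (hb : b * 4 ^ (k + 1) < 2 ^ D) (hD : D ≤ d + e + k) : a * 2 ^ (k + 2) < 2 ^ d := by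
  have h4 : 4 ^ (k + 1) = 2 ^ k * 2 ^ (k + 2) := by
    rw [show 4 = 2 ^ 2 by rfl, ← pow_mul, ← pow_add]
    ring_nf
  refine Nat.lt_of_mul_lt_mul_right (a := 2 ^ e * 2 ^ k) ?_
  calc a * 2 ^ (k + 2) * (2 ^ e * 2 ^ k) = a * 2 ^ e * 4 ^ (k + 1) := by rw [h4]; ring
    _ ≤ b * 4 ^ (k + 1) := Nat.mul_le_mul_right _ hab
    _ < 2 ^ D := hb
    _ ≤ 2 ^ (d + e + k) := Nat.pow_le_pow_right two_pos hD
    _ = 2 ^ d * (2 ^ e * 2 ^ k) := by rw [pow_add, pow_add, mul_assoc]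

theorem two_small_coding_S_bound_general
    (n m : ℕ → ℕ)
    (hmn : ∀ k, m k < n (k + 1))
    (φ : ∀ k, Finset ((i : Set.Ico (n k) (n (k + 1))) → Bool))
    (hφ : ∀ k, ((φ k).card : ℝ) / 2 ^ (n (k + 1) - n k) < 1 / 4 ^ (k + 1))
    (S : ∀ k, Finset ((i : Set.Ico (n k) (m k)) → Bool))
    (hS : ∀ k (s : (i : Set.Ico (n k) (m k)) → Bool),
      s ∈ S k ↔ 2 ^ (n (k + 1) - m k - k) ≤
        ((φ k).filter (fun t => ∀ i : Set.Ico (n k) (m k),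
          t ⟨i.1, ⟨i.2.1, i.2.2.trans (hmn k)⟩⟩ = s i)).card) :
    ∀ k, ((S k).card : ℝ) / 2 ^ (m k - n k) < 1 / 2 ^ (k + 2) := by
  intro k
  let restrict (t : Set.Ico (n k) (n (k + 1)) → Bool) : Set.Ico (n k) (m k) → Bool :=
    fun i => t (Set.inclusion (Set.Ico_subset_Ico_right (hmn k).le) i)
  have hcount : 2 ^ (n (k + 1) - m k - k) * #(S k) ≤ #(φ k) := by
    refine mul_card_le_card_of_le_card_fiber (f := restrict) _ fun s hs => ?_
    simpa only [restrict, funext_iff] using (hS k s).1 hs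
  have hφk : #(φ k) * 4 ^ (k + 1) < 2 ^ (n (k + 1) - n k) := by
    have h := hφ k
    rw [div_lt_div_iff₀ (by positivity) (by positivity), one_mul] at h
    exact_mod_cast h
  rw [div_lt_div_iff₀ (by positivity) (by positivity), one_mul]
  exact_mod_cast Nat.mul_two_pow_lt_of_mul_two_pow_le (by rwa [mul_comm]) hφk (by omega)

/-- Let 𝐭 = (L, φ, φ') be a 2-small coding: L is the interval partition of ℕ with
L_{2k} = [n_k, m_k), L_{2k+1} = [m_k, n_{k+1}) (so n_0 = 0 and n_k < m_k < n_{k+1}),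
I_k = [n_k, n_{k+1}), and φ(k) ⊆ 2^{I_k} satisfies |φ(k)|/2^{|I_k|} < 4^{−(k+1)}
(similarly φ'(k) ⊆ 2^{I'_k} with I'_k = [m_k, m_{k+1})). Define
S_k := {s ∈ 2^{[n_k,m_k)} : s has at least 2^{n_{k+1}−m_k−k} extensions inside φ(k)}.
Then |S_k|/2^{m_k − n_k} < 1/2^{k+2} for all k. -/
theorem two_small_coding_S_bound
    (n m : ℕ → ℕ) (hn0 : n 0 = 0)
    (hnm : ∀ k, n k < m k) (hmn : ∀ k, m k < n (k + 1))
    (φ : ∀ k, Finset ((i : Set.Ico (n k) (n (k + 1))) → Bool))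
    (φ' : ∀ k, Finset ((i : Set.Ico (m k) (m (k + 1))) → Bool))
    (hφ : ∀ k, ((φ k).card : ℝ) / 2 ^ (n (k + 1) - n k) < 1 / 4 ^ (k + 1))
    (hφ' : ∀ k, ((φ' k).card : ℝ) / 2 ^ (m (k + 1) - m k) < 1 / 4 ^ (k + 1))
    (S : ∀ k, Finset ((i : Set.Ico (n k) (m k)) → Bool))
    (hS : ∀ k (s : (i : Set.Ico (n k) (m k)) → Bool),
      s ∈ S k ↔ 2 ^ (n (k + 1) - m k - k) ≤
        ((φ k).filter (fun t => ∀ i : Set.Ico (n k) (m k),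
          t ⟨i.1, ⟨i.2.1, i.2.2.trans (hmn k)⟩⟩ = s i)).card) :
    ∀ k, ((S k).card : ℝ) / 2 ^ (m k - n k) < 1 / 2 ^ (k + 2) :=
  two_small_coding_S_bound_general n m hmn φ hφ S hS
end

section
/- Let b₀, b₁ : ℕ → ℕ be strictly increasing with b₀(n) ≥ n, and let b₁*(n) be defined by b₁*(0) = 0, b₁*(n+1) = b₁(b₁*(n)+1); set I_n := [b₀(n), b₀(n+1)) and I*_n := [b₁*(n), b₁*(n+1)). If b₀(n) ≤ b₁(n) for all but finitely many n, then for all but finitely many n there exists m ≥ n with I_m ⊆ I*_n. -/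
open Filter

theorem strictMono_of_succ_eq_apply_succ {f s : ℕ → ℕ} (hf : StrictMono f)
    (hs : ∀ k, s (k + 1) = f (s k + 1)) : StrictMono s :=
  strictMono_nat_of_lt_succ fun k => (hs k).symm ▸ Nat.lt_of_succ_le hf.le_apply

theorem eventually_interval_contained_general
    (b₀ b₁ : ℕ → ℕ) (hb₁ : StrictMono b₁)
    (hge : ∀ k, k ≤ b₀ k)
    (b₁s : ℕ → ℕ) (hb₁s : ∀ k, b₁s (k + 1) = b₁ (b₁s k + 1))
    (hle : ∀ᶠ k in atTop, b₀ k ≤ b₁ k) :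
    ∀ᶠ n in atTop, ∃ m, n ≤ m ∧ b₁s n ≤ b₀ m ∧ b₀ (m + 1) ≤ b₁s (n + 1) := by
  have hb₁s_ge : ∀ n, n ≤ b₁s n := (strictMono_of_succ_eq_apply_succ hb₁ hb₁s).id_le
  obtain ⟨N, hN⟩ := eventually_atTop.1 hle
  filter_upwards [eventually_ge_atTop N] with n hn
  refine ⟨b₁s n, hb₁s_ge n, hge _, ?_⟩
  rw [hb₁s n]
  exact hN _ (by linarith [hb₁s_ge n])

/-- Let b₀, b₁ : ℕ → ℕ be strictly increasing with b₀(n) ≥ n, and let b₁* be the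
speed-up of b₁: b₁*(0) = 0, b₁*(n+1) = b₁(b₁*(n)+1). Set I_m = [b₀(m), b₀(m+1))
and I*_n = [b₁*(n), b₁*(n+1)). If b₀(n) ≤ b₁(n) for all but finitely many n, then
for all but finitely many n there is some m ≥ n with I_m ⊆ I*_n, i.e.
b₁*(n) ≤ b₀(m) and b₀(m+1) ≤ b₁*(n+1). -/
theorem eventually_interval_contained
    (b₀ b₁ : ℕ → ℕ) (hb₀ : StrictMono b₀) (hb₁ : StrictMono b₁)
    (hge : ∀ k, k ≤ b₀ k)
    (b₁s : ℕ → ℕ) (hb₁s0 : b₁s 0 = 0) (hb₁s : ∀ k, b₁s (k + 1) = b₁ (b₁s k + 1))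
    (hle : ∀ᶠ k in atTop, b₀ k ≤ b₁ k) :
    ∀ᶠ n in atTop, ∃ m, n ≤ m ∧ b₁s n ≤ b₀ m ∧ b₀ (m + 1) ≤ b₁s (n + 1) :=
  eventually_interval_contained_general b₀ b₁ hb₁ hge b₁s hb₁s hle
end
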